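/- A class of graphs has bounded shrub-depth if and only if it has bounded SC-depth; that is, a class G is contained in TM(d,m) for some d,m if and only if G ⊆ SC(k) for some k. -/

import Mathlib

/-- Length of the longest common prefix of `f` and `g` (as strings of length `d`). -/
def prefLen {d : ℕ} (f g : Fin d → ℕ) : ℕ :=
  Nat.findGreatest (fun k => ∀ i : Fin d, (i : ℕ) < k → f i = g i) d

/-- A tree-model of `m` colours and depth `d` for the graph `G`:
a rooted tree of uniform root-to-leaf distance `d` whose leaves are exactly `V(G)`
(encoded by the injective map `f` sending each leaf to its root-to-leaf address),
a colouring of the leaves by `m` colours, and a symmetric signature `S` such that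
two distinct vertices `u,v` are adjacent iff `(col u, col v, ℓ) ∈ S`, where `2ℓ`
is the tree-distance between `u` and `v` in the tree. -/
structure TreeModel {V : Type} (G : SimpleGraph V) (d m : ℕ) where
  f : V → Fin d → ℕ
  inj : Function.Injective f
  col : V → Fin m
  S : Fin m → Fin m → ℕ → Prop
  symm : ∀ i j l, S i j l → S j i l
  adj : ∀ u v : V, u ≠ v →
    (G.Adj u v ↔ S (col u) (col v) (d - prefLen (f u) (f v)))

/-- `G ∈ TM(d,m)`. -/
def InTM (d m : ℕ) {V : Type} (G : SimpleGraph V) : Prop :=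
  Nonempty (TreeModel G d m)

/-- The graph obtained from `G` by complementing the edges on the set `X`. -/
def scFlip {V : Type} (G : SimpleGraph V) (X : Set V) : SimpleGraph V :=
  SimpleGraph.fromRel (fun x y =>
    (x ∈ X ∧ y ∈ X ∧ ¬ G.Adj x y) ∨ ((x ∉ X ∨ y ∉ X) ∧ G.Adj x y))

/-- `InSCAux n V G` holds iff `G ∈ SC(n)`: `SC 0 = {K₁}`, and `SC (n+1)` consists of
subset-complementations (on an arbitrary set `X`) of disjoint unions of graphs in `SC n`. -/
def InSCAux : ℕ → (V : Type) → SimpleGraph V → Prop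
  | 0, V, _ => Nonempty V ∧ Subsingleton V
  | n+1, V, G =>
    ∃ (p : ℕ) (π : V → Fin p) (H : SimpleGraph V) (X : Set V),
      (∀ x y, H.Adj x y → π x = π y) ∧
      (∀ i : Fin p, InSCAux n _ (H.induce (π ⁻¹' {i}))) ∧
      G = scFlip H X

/-- `G ∈ SC(n)` (graphs of SC-depth at most `n`). -/
def InSC (n : ℕ) {V : Type} (G : SimpleGraph V) : Prop := InSCAux n V G

/-!
If `G ∈ SC(k)`, follow the decomposition tree of `G`: each vertex is a leaf, addressed by the
indices of the parts containing it, and coloured by the `k` bits saying whether it lay in the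
complemented set at each level. Two vertices are adjacent iff an odd number of their common
ancestors complemented a set containing both, which is a tree-model of depth `k` with `2 ^ k`
colours.

Conversely, for a tree-model of depth `d + 1`, complementing the signature of the root level
disconnects the subtrees of the root, each of which carries a tree-model of depth `d`. That
signature is a symmetric relation `R` on the `m` colours, and it is put back by `3 m`
subset-complementations of unions of colour classes: over `𝔽₂`, the row of `R` at a colour `a`
is the sum of the squares `A × A` of `A₁ = {a} ∪ R a`, `A₂ = R a \ {a}`, and `{a}` when
`¬ R a a`.
-/

open scoped symmDiff

theorem prefLen_le {d : ℕ} (f g : Fin d → ℕ) : prefLen f g ≤ d :=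
  Nat.findGreatest_le d

theorem eq_of_lt_prefLen {d : ℕ} {f g : Fin d → ℕ} {i : Fin d}
    (hi : (i : ℕ) < prefLen f g) : f i = g i :=
  Nat.findGreatest_spec (P := fun k => ∀ i : Fin d, (i : ℕ) < k → f i = g i)
    (Nat.zero_le d) (fun _ h => absurd h (Nat.not_lt_zero _)) i hi

theorem prefLen_cons_of_ne {d : ℕ} {a b : ℕ} (hab : a ≠ b) (f g : Fin d → ℕ) :
    prefLen (Fin.cons a f : Fin (d + 1) → ℕ) (Fin.cons b g) = 0 :=
  Nat.findGreatest_eq_zero_iff.mpr fun _ hn _ hP => hab (hP 0 hn)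

theorem prefLen_cons_self {d : ℕ} (a : ℕ) (f g : Fin d → ℕ) :
    prefLen (Fin.cons a f : Fin (d + 1) → ℕ) (Fin.cons a g) = prefLen f g + 1 := by
  have hcons : ∀ n, (∀ i : Fin (d + 1), (i : ℕ) < n + 1 →
      (Fin.cons a f : Fin (d + 1) → ℕ) i = (Fin.cons a g : Fin (d + 1) → ℕ) i) ↔
      ∀ i : Fin d, (i : ℕ) < n → f i = g i := by
    intro n
    simp [Fin.forall_fin_succ]
  refine Nat.findGreatest_eq_iff.mpr ⟨by simpa using prefLen_le f g,
    fun _ => (hcons _).mpr fun _ => eq_of_lt_prefLen, ?_⟩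
  rintro (_ | n) hlt hle hP
  · omega
  · exact Nat.findGreatest_is_greatest (by omega : prefLen f g < n) (by omega) ((hcons n).mp hP)

theorem SimpleGraph.symmDiff_adj {V : Type} (G H : SimpleGraph V) (u v : V) :
    (G ∆ H).Adj u v ↔ Xor (G.Adj u v) (H.Adj u v) :=
  Iff.rfl

def colourGraph {V : Type} {κ : Type*} (col : V → κ) (R : κ → κ → Prop) : SimpleGraph V :=
  SimpleGraph.fromRel fun u v => R (col u) (col v)

def squareRel {κ : Type*} (A : Set κ) : κ → κ → Prop := fun x y => x ∈ A ∧ y ∈ A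

instance {κ : Type*} (A : Set κ) : Std.Symm (squareRel A) :=
  ⟨fun _ _ h => h.symm⟩

instance {κ : Type*} (R Q : κ → κ → Prop) [Std.Symm R] [Std.Symm Q] : Std.Symm (R ∆ Q) :=
  ⟨fun x y => by simp only [Pi.symmDiff_apply, symmDiff_eq_xor, Std.Symm.iff x y, imp_self]⟩

section colourGraph

variable {V : Type} {κ : Type*} {col : V → κ} {R Q : κ → κ → Prop}

theorem colourGraph_adj [Std.Symm R] (u v : V) :
    (colourGraph col R).Adj u v ↔ u ≠ v ∧ R (col u) (col v) := by
  rw [colourGraph, SimpleGraph.fromRel_adj]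
  exact and_congr_right fun _ => or_iff_left_of_imp symm

theorem colourGraph_bot (col : V → κ) : colourGraph col ⊥ = ⊥ := by
  ext u v
  simp [colourGraph]

theorem colourGraph_symmDiff [Std.Symm R] [Std.Symm Q] :
    colourGraph col R ∆ colourGraph col Q = colourGraph col (R ∆ Q) := by
  ext u v
  rw [SimpleGraph.symmDiff_adj, colourGraph_adj, colourGraph_adj, colourGraph_adj]
  simp only [Pi.symmDiff_apply, symmDiff_eq_xor]
  grind

theorem eq_offRow_symmDiff_squareRel [Std.Symm R] (a : κ) :
    R = (fun x y => R x y ∧ x ≠ a ∧ y ≠ a) ∆ squareRel {x | x = a ∨ R a x} ∆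
      squareRel {x | x ≠ a ∧ R a x} ∆ squareRel {x | x = a ∧ ¬ R a a} := by
  ext x y
  have hx : R x a ↔ R a x := Std.Symm.iff x a
  simp only [Pi.symmDiff_apply, symmDiff_eq_xor, squareRel, Set.mem_ofPred_eq]
  by_cases hxa : x = a <;> by_cases hya : y = a <;> subst_vars <;> simp [*, xor_comm]
  grind

end colourGraph

theorem scFlip_adj {V : Type} (G : SimpleGraph V) (X : Set V) (u v : V) :
    (scFlip G X).Adj u v ↔ u ≠ v ∧ Xor (G.Adj u v) (u ∈ X ∧ v ∈ X) := by
  rw [scFlip, SimpleGraph.fromRel_adj, G.adj_comm v u]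
  grind

theorem scFlip_empty {V : Type} (G : SimpleGraph V) : scFlip G ∅ = G := by
  ext u v
  simp only [scFlip_adj, Set.mem_empty_iff_false, false_and, xor_def]
  grind [G.ne_of_adj]

theorem scFlip_preimage_eq_symmDiff {V : Type} {κ : Type*} (G : SimpleGraph V) (col : V → κ)
    (A : Set κ) : scFlip G (col ⁻¹' A) = G ∆ colourGraph col (squareRel A) := by
  ext u v
  rw [scFlip_adj, SimpleGraph.symmDiff_adj, colourGraph_adj]
  simp only [Set.mem_preimage, squareRel]
  grind [G.ne_of_adj]

namespace InSCAux

theorem of_iso : ∀ {n : ℕ} {V W : Type} {G : SimpleGraph V} {G' : SimpleGraph W},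
    G ≃g G' → InSCAux n V G → InSCAux n W G'
  | 0, _, _, _, _, e, ⟨hne, hsub⟩ => ⟨hne.map e, e.symm.injective.subsingleton⟩
  | n + 1, _, _, _, G', e, ⟨p, π, H, X, hπ, hparts, hG⟩ => by
    subst hG
    refine ⟨p, π ∘ e.symm, H.comap e.symm, e.symm ⁻¹' X, fun x y h => hπ _ _ h,
      fun i => of_iso ?_ (hparts i), ?_⟩
    · exact { e.toEquiv.subtypeEquiv fun v => by simp with
        map_rel_iff' := by simp }
    · ext x y
      rw [← e.symm.map_adj_iff, scFlip_adj, scFlip_adj, e.symm.injective.ne_iff]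
      rfl

variable {V : Type} {n : ℕ}

theorem scFlip_of_parts {ι : Type*} [Finite ι] {H : SimpleGraph V} (π : V → ι)
    (hπ : ∀ x y, H.Adj x y → π x = π y)
    (hparts : ∀ i, InSCAux n _ (H.induce (π ⁻¹' {i})))
    (X : Set V) : InSCAux (n + 1) V (scFlip H X) := by
  obtain ⟨p, ⟨e⟩⟩ := Finite.exists_equiv_fin ι
  refine ⟨p, e ∘ π, H, X, fun x y h => congrArg e (hπ x y h), fun i => ?_, rfl⟩
  have hpre : (e ∘ π) ⁻¹' {i} = π ⁻¹' {e.symm i} := by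
    ext v
    simp [e.eq_symm_apply]
  rw [hpre]
  exact hparts _

theorem scFlip {G : SimpleGraph V} (h : InSCAux n V G) (X : Set V) :
    InSCAux (n + 1) V (scFlip G X) := by
  refine scFlip_of_parts (fun _ => ()) (fun _ _ _ => rfl) (fun u => ?_) X
  rw [show (fun _ : V => ()) ⁻¹' {u} = Set.univ from Set.eq_univ_of_forall fun _ => rfl]
  exact of_iso G.induceUnivIso.symm h

theorem mono {G : SimpleGraph V} (h : InSCAux n V G) {k : ℕ} (hnk : n ≤ k) : InSCAux k V G := by
  induction k, hnk using Nat.le_induction with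
  | base => exact h
  | succ k _ ih => simpa [scFlip_empty] using ih.scFlip ∅

theorem one_of_subsingleton [Subsingleton V] (G : SimpleGraph V) : InSCAux 1 V G := by
  rw [← scFlip_empty G]
  refine scFlip_of_parts id (fun x y _ => Subsingleton.elim x y) (fun i => ?_) ∅
  exact ⟨⟨⟨i, rfl⟩⟩, ⟨fun x y => Subtype.ext (x.2.trans y.2.symm)⟩⟩

theorem symmDiff_colourGraph {κ : Type*} [DecidableEq κ] {H : SimpleGraph V} (h : InSCAux n V H)
    (col : V → κ) (S : Finset κ) {R : κ → κ → Prop} [Std.Symm R]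
    (hS : ∀ x y, R x y → x ∈ S) :
    InSCAux (n + 3 * S.card) V (H ∆ colourGraph col R) := by
  induction S using Finset.induction_on generalizing R with
  | empty =>
    have hR : R = ⊥ := by
      ext x y
      simpa using hS x y
    simpa [hR, colourGraph_bot] using h
  | insert a S ha ih =>
    let R' : κ → κ → Prop := fun x y => R x y ∧ x ≠ a ∧ y ≠ a
    have : Std.Symm R' := ⟨fun x y ⟨hxy, hx, hy⟩ => ⟨symm hxy, hy, hx⟩⟩
    have hR' : InSCAux (n + 3 * S.card) V (H ∆ colourGraph col R') :=
      ih fun x y ⟨hxy, hx, _⟩ => (Finset.mem_insert.mp (hS x y hxy)).resolve_left hx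
    rw [eq_offRow_symmDiff_squareRel (R := R) a, ← colourGraph_symmDiff, ← colourGraph_symmDiff,
      ← colourGraph_symmDiff, ← symmDiff_assoc, ← symmDiff_assoc, ← symmDiff_assoc]
    simp only [← scFlip_preimage_eq_symmDiff, Finset.card_insert_of_notMem ha,
      mul_add, mul_one]
    exact ((hR'.scFlip _).scFlip _).scFlip _

end InSCAux

namespace TreeModel

variable {V : Type} {G : SimpleGraph V} {d m : ℕ}

theorem S_comm (tm : TreeModel G d m) (a b : Fin m) (l : ℕ) : tm.S a b l ↔ tm.S b a l :=
  ⟨tm.symm a b l, tm.symm b a l⟩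

instance (tm : TreeModel G d m) (l : ℕ) : Std.Symm fun a b => tm.S a b l :=
  ⟨fun a b => tm.symm a b l⟩

theorem subsingleton (tm : TreeModel G 0 m) : Subsingleton V :=
  ⟨fun _ _ => tm.inj (Subsingleton.elim _ _)⟩

/-- `G` with the signature complemented at level `d + 1`, the level of pairs of leaves in different
subtrees of the root. -/
abbrev rootFlip (tm : TreeModel G (d + 1) m) : SimpleGraph V :=
  G ∆ colourGraph tm.col fun a b => tm.S a b (d + 1)

theorem rootFlip_adj (tm : TreeModel G (d + 1) m) (u v : V) :
    tm.rootFlip.Adj u v ↔ u ≠ v ∧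
      Xor (tm.S (tm.col u) (tm.col v) (d + 1 - prefLen (tm.f u) (tm.f v)))
      (tm.S (tm.col u) (tm.col v) (d + 1)) := by
  rw [SimpleGraph.symmDiff_adj, colourGraph_adj]
  by_cases huv : u = v
  · simp [huv]
  · simp only [tm.adj u v huv, ne_eq, huv, not_false_eq_true, true_and]

theorem head_eq_of_rootFlip_adj (tm : TreeModel G (d + 1) m) {u v : V}
    (h : tm.rootFlip.Adj u v) : tm.f u 0 = tm.f v 0 := by
  by_contra hne
  rw [rootFlip_adj, ← Fin.cons_self_tail (tm.f u), ← Fin.cons_self_tail (tm.f v),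
    prefLen_cons_of_ne hne] at h
  simp at h

def induceRootFlip (tm : TreeModel G (d + 1) m) (P : Set V)
    (hP : ∀ u ∈ P, ∀ v ∈ P, tm.f u 0 = tm.f v 0) :
    TreeModel (tm.rootFlip.induce P) d m where
  f u := Fin.tail (tm.f u)
  inj u v h := by
    refine Subtype.ext (tm.inj ?_)
    rw [← Fin.cons_self_tail (tm.f u), ← Fin.cons_self_tail (tm.f v), hP u u.2 v v.2]
    exact congrArg _ h
  col u := tm.col u
  S a b l := Xor (tm.S a b l) (tm.S a b (d + 1))
  symm a b l := by rw [tm.S_comm b a l, tm.S_comm b a (d + 1)]; exact id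
  adj u v huv := by
    rw [SimpleGraph.induce_adj, rootFlip_adj, ← Fin.cons_self_tail (tm.f u),
      ← Fin.cons_self_tail (tm.f v), hP u u.2 v v.2, prefLen_cons_self]
    simp [Subtype.coe_ne_coe.mpr huv]

end TreeModel

theorem inSCAux_of_treeModel : ∀ {d m : ℕ} {V : Type} [Finite V] {G : SimpleGraph V},
    TreeModel G d m → InSCAux (1 + d * (3 * m + 1)) V G
  | 0, _, _, _, G, tm => by
    have := tm.subsingleton
    simpa using InSCAux.one_of_subsingleton G
  | d + 1, m, V, _, G, tm => by
    let π := Set.rangeFactorization fun v => tm.f v 0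
    have hB : InSCAux (1 + d * (3 * m + 1) + 1) V tm.rootFlip := by
      rw [← scFlip_empty tm.rootFlip]
      refine InSCAux.scFlip_of_parts π (fun u v h => Subtype.ext (tm.head_eq_of_rootFlip_adj h))
        (fun i => inSCAux_of_treeModel (tm.induceRootFlip _ ?_)) ∅
      rintro u (rfl : π u = i) v hv
      exact congrArg Subtype.val hv.symm
    rw [show G = tm.rootFlip ∆ colourGraph tm.col (fun a b => tm.S a b (d + 1)) from
      (symmDiff_symmDiff_cancel_right _ _).symm]
    refine (hB.symmDiff_colourGraph tm.col Finset.univ fun x _ _ => Finset.mem_univ x).mono ?_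
    rw [Finset.card_univ, Fintype.card_fin]
    ring_nf
    omega

def flipParity {k : ℕ} (l : ℕ) (a b : Fin k → Bool) : ZMod 2 :=
  ∑ j : Fin k, if (j : ℕ) ≤ l ∧ (a j && b j) then 1 else 0

theorem flipParity_comm {k : ℕ} (l : ℕ) (a b : Fin k → Bool) :
    flipParity l a b = flipParity l b a := by
  simp only [flipParity, Bool.and_comm]

theorem flipParity_cons_zero {k : ℕ} (x y : Bool) (a b : Fin k → Bool) :
    flipParity 0 (Fin.cons x a : Fin (k + 1) → Bool) (Fin.cons y b) =
      if x && y then 1 else 0 := by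
  rw [flipParity, Fin.sum_univ_succ]
  simp

theorem flipParity_cons_succ {k : ℕ} (l : ℕ) (x y : Bool) (a b : Fin k → Bool) :
    flipParity (l + 1) (Fin.cons x a : Fin (k + 1) → Bool) (Fin.cons y b) =
      (if x && y then 1 else 0) + flipParity l a b := by
  rw [flipParity, Fin.sum_univ_succ]
  simp [flipParity]

theorem ZMod.two_add_eq_one_iff (a b : ZMod 2) : a + b = 1 ↔ Xor (a = 1) (b = 1) := by
  revert a b
  decide

/-- `f v` is the address of `v` in an SC-decomposition tree of depth `k`, and `col v j` records
whether `v` lies in the set complemented at its ancestor of depth `j`. -/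
structure FlipModel {V : Type} (G : SimpleGraph V) (k : ℕ) where
  f : V → Fin k → ℕ
  inj : Function.Injective f
  col : V → Fin k → Bool
  adj : ∀ u v : V, u ≠ v →
    (G.Adj u v ↔ flipParity (prefLen (f u) (f v)) (col u) (col v) = 1)

namespace FlipModel

variable {V : Type} {k : ℕ}

def ofSubsingleton [Subsingleton V] (G : SimpleGraph V) : FlipModel G 0 where
  f _ := Fin.elim0
  inj u v _ := Subsingleton.elim u v
  col _ := Fin.elim0
  adj u v huv := absurd (Subsingleton.elim u v) huv

theorem nonempty_scFlip_of_parts {p : ℕ} {H : SimpleGraph V} (π : V → Fin p)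
    (hπ : ∀ x y, H.Adj x y → π x = π y) (M : ∀ i, FlipModel (H.induce (π ⁻¹' {i})) k)
    (X : Set V) : Nonempty (FlipModel (scFlip H X) (k + 1)) := by
  classical
  let g : V → Fin k → ℕ := fun v => (M (π v)).f ⟨v, rfl⟩
  let c : V → Fin k → Bool := fun v => (M (π v)).col ⟨v, rfl⟩
  have hg : ∀ i (x : π ⁻¹' {i}), g x = (M i).f x ∧ c x = (M i).col x := by
    rintro i ⟨v, rfl : π v = i⟩
    exact ⟨rfl, rfl⟩
  refine ⟨⟨fun v => Fin.cons (π v : ℕ) (g v), fun u v h => ?_,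
    fun v => Fin.cons (decide (v ∈ X)) (c v), fun u v huv => ?_⟩⟩
  · have h0 : π u = π v := Fin.val_injective (by simpa using congrFun h 0)
    have ht : g u = g v := by simpa using congrArg Fin.tail h
    rw [(hg (π u) ⟨u, rfl⟩).1, (hg (π u) ⟨v, h0.symm⟩).1] at ht
    exact congrArg Subtype.val ((M (π u)).inj ht)
  rw [scFlip_adj]
  by_cases h0 : π u = π v
  · have hM := (M (π u)).adj ⟨u, rfl⟩ ⟨v, h0.symm⟩ fun h => huv (congrArg Subtype.val h)
    rw [SimpleGraph.induce_adj, ← (hg _ _).1, ← (hg _ _).1, ← (hg _ _).2, ← (hg _ _).2]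
      at hM
    rw [h0, prefLen_cons_self, flipParity_cons_succ, add_comm, ZMod.two_add_eq_one_iff, ← hM]
    simp [huv]
  · have hH : ¬ H.Adj u v := fun h => h0 (hπ u v h)
    rw [prefLen_cons_of_ne (fun h => h0 (Fin.val_injective h)), flipParity_cons_zero]
    simp [huv, hH]

theorem nonempty_of_inSCAux : ∀ {k : ℕ} {V : Type} {G : SimpleGraph V},
    InSCAux k V G → Nonempty (FlipModel G k)
  | 0, _, G, ⟨_, _⟩ => ⟨ofSubsingleton G⟩
  | _ + 1, _, _, ⟨_, π, _, X, hπ, hparts, rfl⟩ =>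
    nonempty_scFlip_of_parts π hπ (fun i => (nonempty_of_inSCAux (hparts i)).some) X

theorem inTM {G : SimpleGraph V} (M : FlipModel G k) : InTM k (2 ^ k) G := by
  let e : (Fin k → Bool) ≃ Fin (2 ^ k) := Fintype.equivFinOfCardEq (by simp)
  refine ⟨⟨M.f, M.inj, fun v => e (M.col v),
    fun a b l => flipParity (k - l) (e.symm a) (e.symm b) = 1, fun a b l => ?_,
    fun u v huv => ?_⟩⟩
  · rw [flipParity_comm]
    exact id
  · rw [M.adj u v huv, Nat.sub_sub_self (prefLen_le _ _)]
    simp only [Equiv.symm_apply_apply]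

end FlipModel

theorem InTM.inSC {d m : ℕ} {V : Type} [Finite V] {G : SimpleGraph V} (h : InTM d m G) :
    InSC (1 + d * (3 * m + 1)) G :=
  inSCAux_of_treeModel h.some

theorem InSC.inTM {k : ℕ} {V : Type} {G : SimpleGraph V} (h : InSC k G) : InTM k (2 ^ k) G :=
  (FlipModel.nonempty_of_inSCAux h).some.inTM

/-- A class of finite graphs has bounded shrub-depth iff it has bounded SC-depth. -/
theorem stmt_11 (C : ∀ (V : Type) [Fintype V], SimpleGraph V → Prop) :
    (∃ d m : ℕ, ∀ (V : Type) [Fintype V] (G : SimpleGraph V), C V G → InTM d m G) ↔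
    (∃ k : ℕ, ∀ (V : Type) [Fintype V] (G : SimpleGraph V), C V G → InSC k G) := by
  constructor
  · rintro ⟨d, m, hC⟩
    exact ⟨1 + d * (3 * m + 1), fun V _ G hG => (hC V G hG).inSC⟩
  · rintro ⟨k, hC⟩
    exact ⟨k, 2 ^ k, fun V _ G hG => (hC V G hG).inTM⟩
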